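/- arXiv:2207.07449 — 3 statements merged into one kernel-verified Lean document; each statement's English description precedes it below -/
import Mathlib

section
/- Let W = ((v₁,…,v_ℓ),(r₁,…,r_ℓ)) be an injective labeled walk (each nonzero label occurs at most once) that contains no labeled digons, and let a, b ∈ [ℓ] with a ≤ b. If v_a = v_b and the labeled subwalk W[a+1, b−1] is a palindrome, then no index i with a+1 ≤ i ≤ b−1 is labeled (i.e., rᵢ = 0 for all such i). -/
/-- A labeled walk is given by a vertex sequence `v` and a label sequence `r`
(indices `1,…,ℓ`, labels in `{0,…,k}`, `r i = 0` meaning unlabeled).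
If the labeled walk is injective (each nonzero label occurs at most once),
has no labeled digons, `v a = v b`, and the labeled subwalk `W[a+1,b-1]` is a
palindrome, then no index in `[a+1,b-1]` is labeled. -/
theorem no_labels_on_palindromic_subwalk
    {V : Type*} (G : SimpleGraph V) (ℓ k : ℕ) (v : ℕ → V) (r : ℕ → ℕ)
    (hwalk : ∀ i, 1 ≤ i → i < ℓ → G.Adj (v i) (v (i + 1)))
    (hlab : ∀ i, 1 ≤ i → i ≤ ℓ → r i ≤ k)
    (hinj : ∀ i j, 1 ≤ i → i ≤ ℓ → 1 ≤ j → j ≤ ℓ → r i ≠ 0 → r i = r j → i = j)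
    (hnodigon : ∀ i, 1 < i → i < ℓ → v (i - 1) = v (i + 1) → r i = 0)
    (a b : ℕ) (ha : 1 ≤ a) (hab : a ≤ b) (hb : b ≤ ℓ)
    (hv : v a = v b)
    (hpal : ∀ i, a + 1 ≤ i → i ≤ b - 1 → v i = v (a + b - i) ∧ r i = r (a + b - i)) :
    ∀ i, a + 1 ≤ i → i ≤ b - 1 → r i = 0 := by
  intro i hi1 hi2
  by_contra h
  -- i is in the interior, so b ≥ i+1 and a+1 ≤ i
  have hbi : i + 1 ≤ b := by omega
  have hr := (hpal i hi1 hi2).2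
  -- injectivity forces i to be the midpoint
  have hmid : i = a + b - i := by
    apply hinj i (a + b - i) (by omega) (by omega) (by omega) (by omega) h hr
  have h2i : 2 * i = a + b := by omega
  -- show v (i-1) = v (i+1)
  have hveq : v (i - 1) = v (i + 1) := by
    rcases eq_or_lt_of_le hi1 with heq | hlt
    · -- i = a + 1, so i - 1 = a and i + 1 = b
      have h1 : i - 1 = a := by omega
      have h2 : i + 1 = b := by omega
      rw [h1, h2]; exact hv
    · -- a + 1 ≤ i - 1
      have hp := (hpal (i - 1) (by omega) (by omega)).1
      have h3 : a + b - (i - 1) = i + 1 := by omega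
      rw [h3] at hp
      exact hp
  exact h (hnodigon i (by omega) (by omega) hveq)
end

section
/- Let A be an r × k matrix over a field F whose columns are linearly independent (so r ≥ k), and let R be a k × r matrix whose entries are independent uniformly random elements of a subset S ⊆ F. Then the probability that the k × k matrix R·A is singular is at most k/|S|. In particular, if |S| ≥ 2k, the product RA is nonsingular with probability at least 1/2. -/
/-- Decidability of entrywise membership for matrices (instance search no longer finds it). -/
instance Matrix.decidablePredForallMem {F : Type*} [DecidableEq F] {k r : ℕ} (S : Finset F) :
    DecidablePred (fun R : Matrix (Fin k) (Fin r) F => ∀ i j, R i j ∈ S) :=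
  fun R => @Fintype.decidableForallFintype _ _
    (fun i => @Fintype.decidableForallFintype _ _ (fun j => Finset.decidableMem (R i j) S) _) _

/-!
For a `k × r` matrix `X` of indeterminates, `det (X * A)` is a polynomial of total degree at most
`k` in the entries of `X`. It is nonzero: `A` has independent columns, hence a left inverse `B`,
and the polynomial evaluates to `det (B * A) = 1` at `X = B`. The Schwartz–Zippel lemma then bounds
the proportion of its zeros among the matrices with entries in `S` by `k / #S`.
-/

open Finset MvPolynomial

namespace MvPolynomial

variable {R : Type*} [CommRing R]

theorem card_filter_eval_eq_zero_mul_card_le [IsDomain R] [DecidableEq R] {σ : Type*}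
    [Fintype σ] [DecidableEq σ] {p : MvPolynomial σ R} (hp : p ≠ 0) (S : Finset R) :
    #{f ∈ Fintype.piFinset fun _ : σ ↦ S | eval f p = 0} * #S
      ≤ p.totalDegree * #S ^ Fintype.card σ := by
  obtain hS | hS := S.eq_empty_or_nonempty
  · simp [hS]
  set e := Fintype.equivFin σ
  have hq : renameEquiv R e p ≠ 0 := (map_ne_zero_iff _ (renameEquiv R e).injective).mpr hp
  have hzeros : #{f ∈ Fintype.piFinset fun _ : σ ↦ S | eval f p = 0}
      = #{g ∈ Fintype.piFinset fun _ : Fin (Fintype.card σ) ↦ S | eval g (renameEquiv R e p) = 0} :=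
    card_equiv (e.arrowCongr (Equiv.refl R)) fun f ↦ by
      simp only [mem_filter, Fintype.mem_piFinset, Equiv.arrowCongr_apply, Equiv.coe_refl, id_eq,
        renameEquiv_apply, eval_rename, Function.comp_def, e.symm_apply_apply]
      rw [e.symm.forall_congr_right (q := fun a ↦ f a ∈ S)]
  have h := schwartz_zippel_totalDegree hq S
  rw [totalDegree_renameEquiv, ← hzeros, div_le_div_iff₀ (by positivity) (by positivity)] at h
  exact_mod_cast h

theorem totalDegree_det_le {n σ : Type*} [Fintype n] [DecidableEq n]
    {M : Matrix n n (MvPolynomial σ R)} (hM : ∀ i j, (M i j).totalDegree ≤ 1) :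
    M.det.totalDegree ≤ Fintype.card n := by
  rw [Matrix.det_apply']
  refine (totalDegree_finsetSum _ _).trans <| Finset.sup_le fun π _ ↦ ?_
  calc (_ * ∏ i, M (π i) i).totalDegree
      ≤ ((Equiv.Perm.sign π : ℤ) : MvPolynomial σ R).totalDegree
          + (∏ i, M (π i) i).totalDegree := totalDegree_mul _ _
    _ ≤ 0 + ∑ i : n, 1 := by
      gcongr
      · rw [← map_intCast (C : R →+* MvPolynomial σ R), totalDegree_C]
      · exact (totalDegree_finsetProd _ _).trans (Finset.sum_le_sum fun i _ ↦ hM _ _)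
    _ = Fintype.card n := by simp

end MvPolynomial

namespace Matrix

variable {m n : Type*} [Fintype m] [Fintype n] [DecidableEq m]

theorem exists_mul_eq_one_of_linearIndependent_col [DecidableEq n] {K : Type*} [Field K]
    {A : Matrix m n K} (hA : LinearIndependent K A.col) : ∃ B : Matrix n m K, B * A = 1 := by
  obtain ⟨g, hg⟩ := A.mulVecLin.exists_leftInverse_of_injective <|
    LinearMap.ker_eq_bot.mpr (mulVec_injective_iff.mpr hA)
  refine ⟨LinearMap.toMatrix' g, ?_⟩
  rw [← LinearMap.toMatrix'_toLin' A, ← LinearMap.toMatrix'_comp, toLin'_apply', hg,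
    LinearMap.toMatrix'_id]

theorem filter_forall_mem_eq_map {α : Type*} [Fintype α] [DecidableEq n]
    (S : Finset α) [DecidablePred fun M : Matrix m n α ↦ ∀ i j, M i j ∈ S] :
    univ.filter (fun M : Matrix m n α ↦ ∀ i j, M i j ∈ S)
      = (Fintype.piFinset fun _ : m × n ↦ S).map ((Equiv.curry m n α).trans of).toEmbedding := by
  ext M
  rw [mem_map_equiv]
  simp [Fintype.mem_piFinset]

variable {R : Type*} [CommRing R]

-- Without `σ := m × n` the product elaborates with the multiplication of `CStarMatrix`.
theorem eval_det_mvPolynomialX_mul (A : Matrix n m R) (f : m × n → R) :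
    eval f (mvPolynomialX m n R * A.map (C (σ := m × n))).det
      = (of (fun i j ↦ f (i, j)) * A).det := by
  rw [(eval f).map_det, RingHom.mapMatrix_apply, Matrix.map_mul]
  congr 2 <;> ext <;> simp

theorem totalDegree_det_mvPolynomialX_mul_le (A : Matrix n m R) :
    (mvPolynomialX m n R * A.map (C (σ := m × n))).det.totalDegree ≤ Fintype.card m := by
  refine totalDegree_det_le fun i j ↦ ?_
  rw [mul_apply]
  refine (totalDegree_finsetSum _ _).trans <| Finset.sup_le fun l _ ↦ ?_
  rw [mvPolynomialX_apply, map_apply, mul_comm, C_mul_X_eq_monomial]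
  exact (totalDegree_monomial_le _ _).trans (by simp)

theorem det_mvPolynomialX_mul_ne_zero [Nontrivial R] {A : Matrix n m R} {B : Matrix m n R}
    (hBA : B * A = 1) : (mvPolynomialX m n R * A.map (C (σ := m × n))).det ≠ 0 := by
  intro h
  have := congr_arg (eval fun p : m × n ↦ B p.1 p.2) h
  rw [eval_det_mvPolynomialX_mul, map_zero] at this
  change (B * A).det = 0 at this
  simp [hBA] at this

theorem card_filter_det_mul_eq_zero_mul_card_le [IsDomain R] [Fintype R] [DecidableEq R]
    [DecidableEq n] {A : Matrix n m R} {B : Matrix m n R} (hBA : B * A = 1) (S : Finset R)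
    [DecidablePred fun M : Matrix m n R ↦ ∀ i j, M i j ∈ S] :
    #{M ∈ univ.filter (fun M : Matrix m n R ↦ ∀ i j, M i j ∈ S) | (M * A).det = 0} * #S
      ≤ Fintype.card m * #(univ.filter fun M : Matrix m n R ↦ ∀ i j, M i j ∈ S) := by
  set p := (mvPolynomialX m n R * A.map (C (σ := m × n))).det
  rw [filter_forall_mem_eq_map, filter_map, card_map, card_map, Fintype.card_piFinset,
    prod_const, card_univ]
  calc #{f ∈ Fintype.piFinset fun _ : m × n ↦ S | (of (fun i j ↦ f (i, j)) * A).det = 0} * #S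
      = #{f ∈ Fintype.piFinset fun _ : m × n ↦ S | eval f p = 0} * #S := by
        simp only [p, eval_det_mvPolynomialX_mul]
    _ ≤ p.totalDegree * #S ^ Fintype.card (m × n) :=
        card_filter_eval_eq_zero_mul_card_le (det_mvPolynomialX_mul_ne_zero hBA) S
    _ ≤ Fintype.card m * #S ^ Fintype.card (m × n) := by
        gcongr; exact totalDegree_det_mvPolynomialX_mul_le A

end Matrix

theorem random_truncation_nonsingular
    (F : Type*) [Field F] [Fintype F] [DecidableEq F] (k r : ℕ)
    (A : Matrix (Fin r) (Fin k) F)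
    (hA : LinearIndependent F (fun j : Fin k => fun i : Fin r => A i j))
    (S : Finset F) (hS : S.Nonempty) :
    ((((Finset.univ.filter (fun R : Matrix (Fin k) (Fin r) F => ∀ i j, R i j ∈ S)).filter
          (fun R => (R * A).det = 0)).card : ℝ)
        ≤ (k : ℝ) / (S.card : ℝ) *
          ((Finset.univ.filter (fun R : Matrix (Fin k) (Fin r) F => ∀ i j, R i j ∈ S)).card : ℝ)) ∧
      (2 * k ≤ S.card →
        (((Finset.univ.filter (fun R : Matrix (Fin k) (Fin r) F => ∀ i j, R i j ∈ S)).card : ℝ)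
          ≤ 2 * (((Finset.univ.filter
              (fun R : Matrix (Fin k) (Fin r) F => ∀ i j, R i j ∈ S)).filter
                (fun R => (R * A).det ≠ 0)).card : ℝ))) := by
  set Ω := univ.filter fun R : Matrix (Fin k) (Fin r) F ↦ ∀ i j, R i j ∈ S
  obtain ⟨B, hBA⟩ := Matrix.exists_mul_eq_one_of_linearIndependent_col hA
  have hcount := Matrix.card_filter_det_mul_eq_zero_mul_card_le hBA S
  rw [Fintype.card_fin] at hcount
  have hS0 : (0 : ℝ) < #S := by exact_mod_cast hS.card_pos
  have hsingular : (#{R ∈ Ω | (R * A).det = 0} : ℝ) ≤ k / #S * #Ω := by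
    rw [div_mul_eq_mul_div, le_div_iff₀ hS0]
    exact_mod_cast hcount
  refine ⟨hsingular, fun h2k ↦ ?_⟩
  have hsplit : (#{R ∈ Ω | (R * A).det = 0} : ℝ) + #{R ∈ Ω | (R * A).det ≠ 0} = #Ω := by
    exact_mod_cast card_filter_add_card_filter_not _
  have hhalf : (k : ℝ) / #S ≤ 1 / 2 := by
    rw [div_le_div_iff₀ hS0 two_pos]
    exact_mod_cast (by omega : k * 2 ≤ 1 * #S)
  have := mul_le_mul_of_nonneg_right hhalf (Nat.cast_nonneg (α := ℝ) #Ω)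
  linarith
end

section
/- Let W¹ and W² be two labeled walks with distinct last vertices, and suppose v is a vertex occurring at index a in W¹ and index b in W². Then the suffix-swap operation, which exchanges the suffix of W¹ starting at index a+1 with the suffix of W² starting at index b+1, is a fixed-point-free involution on such pairs: applying it twice returns the original pair, the result is again a pair of labeled walks (consecutive vertices remain adjacent), the multiset union of edges of the two walks is preserved, the multiset of labeled vertices is preserved, the pair of first vertices is preserved, the unordered pair of last vertices is preserved, and the resulting pair differs from the original pair. -/
/-!
Cut the walk `l₁` after position `a` and `l₂` after position `b`: both prefixes end at `v`, and
everything follows from this splice condition alone. The new junctions are old edges of `l₂` and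
`l₁`, so adjacency and the edge multiset survive. The last vertex of `l₁.take a ++ l₂.drop b` is
that of `l₂`, so the swap exchanges the last vertices, and in particular it cannot fix `l₁`,
whose last vertex differs from that of `l₂`.
-/

/-- The multiset of edges of a walk given as a list of vertices. -/
def edgeMultiset {V : Type*} (l : List V) : Multiset (Sym2 V) :=
  ((l.zip l.tail).map (fun p => s(p.1, p.2)) : List (Sym2 V))

lemma edgeMultiset_cons_cons {V : Type*} (x y : V) (l : List V) :
    edgeMultiset (x :: y :: l) = s(x, y) ::ₘ edgeMultiset (y :: l) := by
  simp [edgeMultiset]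

lemma edgeMultiset_append {V : Type*} (l₁ l₂ : List V) :
    edgeMultiset (l₁ ++ l₂) = edgeMultiset l₁ + edgeMultiset (l₁.getLast?.toList ++ l₂) := by
  induction l₁ with
  | nil => simp [edgeMultiset]
  | cons x t ih =>
    cases t with
    | nil => simp [edgeMultiset]
    | cons y t =>
      rw [List.cons_append, List.cons_append, edgeMultiset_cons_cons, ← List.cons_append, ih,
        edgeMultiset_cons_cons, Multiset.cons_add, List.getLast?_cons_cons]

namespace List

variable {α : Type*} {l₁ l₂ : List α} {a b : ℕ}

lemma take_append_drop_take_append_drop (ha : a ≤ l₁.length) (hb : b ≤ l₂.length) :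
    (l₁.take a ++ l₂.drop b).take a ++ (l₂.take b ++ l₁.drop a).drop b = l₁ := by
  rw [take_left' (length_take_of_le ha), drop_left' (length_take_of_le hb), take_append_drop]

lemma head?_take_append_of_ne_zero (ha : a ≠ 0) (hl : l₁ ≠ []) :
    (l₁.take a ++ l₂).head? = l₁.head? := by
  obtain ⟨x, t, rfl⟩ := exists_cons_of_ne_nil hl
  rw [head?_append, head?_take, if_neg ha, head?_cons, Option.some_or]

lemma getLast?_take_append_drop (h : (l₁.take a).getLast? = (l₂.take b).getLast?) :
    (l₁.take a ++ l₂.drop b).getLast? = l₂.getLast? := by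
  rw [getLast?_append, h, ← getLast?_append, take_append_drop]

lemma IsChain.take_append_drop {R : α → α → Prop} (h₁ : IsChain R l₁) (h₂ : IsChain R l₂)
    (h : (l₁.take a).getLast? = (l₂.take b).getLast?) : IsChain R (l₁.take a ++ l₂.drop b) := by
  refine isChain_append.2 ⟨h₁.take a, h₂.drop b, ?_⟩
  rw [h]
  exact (isChain_append.1 ((List.take_append_drop b l₂).symm ▸ h₂)).2.2

lemma coe_filter_take_append_drop_add (p : α → Bool) :
    (((l₁.take a ++ l₂.drop b).filter p : List α) : Multiset α)
        + ((l₂.take b ++ l₁.drop a).filter p : List α)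
      = (l₁.filter p : Multiset α) + (l₂.filter p : Multiset α) := by
  conv_rhs => rw [← take_append_drop a l₁, ← take_append_drop b l₂]
  simp only [filter_append, ← Multiset.coe_add]
  abel

lemma edgeMultiset_take_append_drop_add (h : (l₁.take a).getLast? = (l₂.take b).getLast?) :
    edgeMultiset (l₁.take a ++ l₂.drop b) + edgeMultiset (l₂.take b ++ l₁.drop a)
      = edgeMultiset l₁ + edgeMultiset l₂ := by
  conv_rhs => rw [← take_append_drop a l₁, ← take_append_drop b l₂]
  simp only [edgeMultiset_append (l₁.take a), edgeMultiset_append (l₂.take b), h]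
  abel

end List

/-- Suffix swap on a pair of labeled walks (lists of (vertex, label) pairs):
exchanging the suffix of `W1` starting at index `a+1` (1-based) with the
suffix of `W2` starting at index `b+1`, where both walks carry the vertex `v`
at positions `a` and `b` respectively and have distinct last vertices, is a
fixed-point-free involution preserving walks, the multiset of edges, the
multiset of labeled (vertex, label) pairs, the first vertices, and the
unordered pair of last vertices. -/
theorem suffix_swap_involution
    {V : Type*} (G : SimpleGraph V) (W1 W2 : List (V × ℕ)) (a b : ℕ) (v : V)
    (ha1 : 1 ≤ a) (ha2 : a ≤ W1.length) (hb1 : 1 ≤ b) (hb2 : b ≤ W2.length)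
    (hW1 : (W1.map Prod.fst).Chain' G.Adj) (hW2 : (W2.map Prod.fst).Chain' G.Adj)
    (hva : (W1.map Prod.fst)[a - 1]? = some v)
    (hvb : (W2.map Prod.fst)[b - 1]? = some v)
    (hlast : (W1.map Prod.fst).getLast? ≠ (W2.map Prod.fst).getLast?) :
    (((W1.take a ++ W2.drop b).take a ++ (W2.take b ++ W1.drop a).drop b = W1) ∧
      ((W2.take b ++ W1.drop a).take b ++ (W1.take a ++ W2.drop b).drop a = W2)) ∧
    ((((W1.take a ++ W2.drop b).map Prod.fst).Chain' G.Adj) ∧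
      (((W2.take b ++ W1.drop a).map Prod.fst).Chain' G.Adj)) ∧
    (edgeMultiset ((W1.take a ++ W2.drop b).map Prod.fst)
        + edgeMultiset ((W2.take b ++ W1.drop a).map Prod.fst)
      = edgeMultiset (W1.map Prod.fst) + edgeMultiset (W2.map Prod.fst)) ∧
    ((((W1.take a ++ W2.drop b).filter (fun p => p.2 ≠ 0) : List (V × ℕ)) : Multiset (V × ℕ))
        + (((W2.take b ++ W1.drop a).filter (fun p => p.2 ≠ 0) : List (V × ℕ)) : Multiset (V × ℕ))
      = ((W1.filter (fun p => p.2 ≠ 0) : List (V × ℕ)) : Multiset (V × ℕ))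
        + ((W2.filter (fun p => p.2 ≠ 0) : List (V × ℕ)) : Multiset (V × ℕ))) ∧
    ((W1.take a ++ W2.drop b).head? = W1.head? ∧
      (W2.take b ++ W1.drop a).head? = W2.head?) ∧
    (({((W1.take a ++ W2.drop b).map Prod.fst).getLast?,
        ((W2.take b ++ W1.drop a).map Prod.fst).getLast?} : Multiset (Option V))
      = {(W1.map Prod.fst).getLast?, (W2.map Prod.fst).getLast?}) ∧
    ((W1.take a ++ W2.drop b, W2.take b ++ W1.drop a) ≠ (W1, W2)) := by
  have hsplice : ((W1.map Prod.fst).take a).getLast? = ((W2.map Prod.fst).take b).getLast? := by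
    rw [List.getLast?_take, List.getLast?_take, if_neg (by omega), if_neg (by omega), hva, hvb,
      Option.some_or, Option.some_or]
  have hlast₁ := List.getLast?_take_append_drop hsplice
  have hlast₂ := List.getLast?_take_append_drop hsplice.symm
  simp only [List.map_append, List.map_take, List.map_drop]
  refine ⟨⟨List.take_append_drop_take_append_drop ha2 hb2,
      List.take_append_drop_take_append_drop hb2 ha2⟩,
    ⟨hW1.take_append_drop hW2 hsplice, hW2.take_append_drop hW1 hsplice.symm⟩,
    List.edgeMultiset_take_append_drop_add hsplice,
    List.coe_filter_take_append_drop_add _,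
    ⟨List.head?_take_append_of_ne_zero (by omega) (List.ne_nil_of_length_pos (by omega)),
      List.head?_take_append_of_ne_zero (by omega) (List.ne_nil_of_length_pos (by omega))⟩,
    by rw [hlast₁, hlast₂, Multiset.pair_comm], fun h => hlast ?_⟩
  rw [← hlast₁, ← List.map_take, ← List.map_drop, ← List.map_append, (Prod.mk.inj h).1]
end
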